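/- arXiv:2604.11026 — 4 statements merged into one kernel-verified Lean document; each statement's English description precedes it below -/
import Mathlib

section
/- Let y_i and y_j be nonnegative reals with y_i² + y_j² = c where 0 < c < 1/2, and set m = √(c/2). Then log(1 - y_i) + log(1 - y_j) ≥ 2 log(1 - m); that is, among nonpositive points (a,b) with a² + b² = c, the sum log(1+a) + log(1+b) is minimized at a = b = -√(c/2). -/
/-- Among nonpositive points `(a, b)` with `a² + b² = c` (`0 < c < 1/2`), the sum
`log(1+a) + log(1+b)` is minimized at `a = b = -√(c/2)`: equivalently, for nonnegative
`yᵢ, yⱼ` with `yᵢ² + yⱼ² = c`,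
`log(1 - yᵢ) + log(1 - yⱼ) ≥ 2 log(1 - √(c/2))`. -/
theorem log_sum_min_on_circle (yi yj c : ℝ) (hyi : 0 ≤ yi) (hyj : 0 ≤ yj)
    (hsum : yi ^ 2 + yj ^ 2 = c) (hc0 : 0 < c) (hc : c < 1 / 2) :
    Real.log (1 - yi) + Real.log (1 - yj) ≥ 2 * Real.log (1 - Real.sqrt (c / 2)) := by
  set m := Real.sqrt (c / 2) with hm
  have hm0 : 0 ≤ m := Real.sqrt_nonneg _
  have hmsq : m ^ 2 = c / 2 := Real.sq_sqrt (by linarith)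
  have hm1 : m < 1 / 2 := by nlinarith [hmsq]
  have hyi1 : yi < 1 := by nlinarith
  have hyj1 : yj < 1 := by nlinarith
  have hs : yi + yj ≤ 2 * m := by nlinarith [sq_nonneg (yi - yj), sq_nonneg (yi + yj - 2 * m)]
  have hkey : (1 - m) ^ 2 ≤ (1 - yi) * (1 - yj) := by
    nlinarith [mul_nonneg (by linarith : (0:ℝ) ≤ 2 * m - (yi + yj))
      (by nlinarith : (0:ℝ) ≤ 2 - (2 * m + yi + yj))]
  calc 2 * Real.log (1 - m) = Real.log ((1 - m) ^ 2) := by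
        rw [Real.log_pow]; push_cast; ring
    _ ≤ Real.log ((1 - yi) * (1 - yj)) :=
        Real.log_le_log (by nlinarith) hkey
    _ = Real.log (1 - yi) + Real.log (1 - yj) :=
        Real.log_mul (by linarith) (by linarith)
end

section
/- Let x_1, …, x_n be positive real numbers satisfying ∑_{i=1}^n (x_i - 1)² ≤ ε where 0 < ε < 1/2 and ε < n. Then |∑_{i=1}^n log x_i| ≤ -n log(1 - √(ε/n)). -/
/-!
Write `xᵢ = 1 + tᵢ` and `u = √(ε / n)`, so that `∑ tᵢ² ≤ n u²`. The upper bound follows from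
`log x ≤ x - 1` and Cauchy–Schwarz: `∑ log xᵢ ≤ ∑ tᵢ ≤ n u ≤ -n log (1 - u)`.
For the lower bound, `xᵢ ≥ 1 - |tᵢ|`, and `∏ (1 - sᵢ) ≥ (1 - r)ⁿ` whenever `sᵢ ≥ 0` and
`∑ sᵢ² = n r² ≤ 1/2`: replacing some `sₐ ≥ r` and `s_b ≤ r` by `r` and `√(sₐ² + s_b² - r²)` keeps
the sum of squares, does not increase the product, and fixes one entry at `r`; induct on the rest.
-/

open Finset Real

/- With `S = a² + b² = r² + w²` fixed, `(1 - r)(1 - w) = ((1 - (r + w))² + 1 - S) / 2`; moreover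
`a + b ≤ r + w ≤ √(2S) ≤ 1`, since `r² w² - a² b² = (a² - r²)(r² - b²) ≥ 0`. -/
theorem one_sub_mul_one_sub_le_of_sq_add_sq_eq {a b r w : ℝ} (hb : 0 ≤ b) (hw : 0 ≤ w)
    (hbr : b ≤ r) (hra : r ≤ a) (hsq : r ^ 2 + w ^ 2 = a ^ 2 + b ^ 2)
    (hhalf : a ^ 2 + b ^ 2 ≤ 1 / 2) :
    (1 - r) * (1 - w) ≤ (1 - a) * (1 - b) := by
  have hab_le_rw : a * b ≤ r * w := by
    nlinarith [mul_nonneg (by nlinarith : (0:ℝ) ≤ r ^ 2 - b ^ 2)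
        (by nlinarith : (0:ℝ) ≤ a ^ 2 - r ^ 2),
      mul_nonneg (hb.trans (hbr.trans hra)) hb, mul_nonneg (hb.trans hbr) hw]
  have hrw_le_one : r + w ≤ 1 := by nlinarith [sq_nonneg (r - w)]
  have hab_le : a + b ≤ r + w := by
    nlinarith [mul_nonneg (hb.trans (hbr.trans hra)) hb, mul_nonneg (hb.trans hbr) hw]
  nlinarith [mul_nonneg (sub_nonneg.2 hab_le) (by linarith : (0:ℝ) ≤ 2 - (r + w) - (a + b))]

namespace Multiset

variable {α M : Type*} [AddCommMonoid M] [LinearOrder M] [IsOrderedCancelAddMonoid M]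

theorem exists_le_of_sum_map_le_card_nsmul {s : Multiset α} (hs : s ≠ 0) {f : α → M} {c : M}
    (h : (s.map f).sum ≤ card s • c) : ∃ a ∈ s, f a ≤ c := by
  by_contra! hlt
  have := sum_lt_sum_of_nonempty hs (f := fun _ => c) hlt
  simp only [map_const', sum_replicate] at this
  exact this.not_ge h

theorem exists_le_of_card_nsmul_le_sum_map {s : Multiset α} (hs : s ≠ 0) {f : α → M} {c : M}
    (h : card s • c ≤ (s.map f).sum) : ∃ a ∈ s, c ≤ f a :=
  exists_le_of_sum_map_le_card_nsmul (M := Mᵒᵈ) hs h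

theorem prod_map_one_sub_nonneg_of_sum_map_sq_le_half {s : Multiset ℝ}
    (hhalf : (s.map (· ^ 2)).sum ≤ 1 / 2) : 0 ≤ (s.map (1 - ·)).prod := by
  refine prod_nonneg <| forall_mem_map_iff.2 fun t ht => ?_
  have : t ^ 2 ≤ 1 / 2 :=
    (single_le_sum (by simp [sq_nonneg]) _ (mem_map_of_mem (· ^ 2) ht)).trans hhalf
  nlinarith

theorem exists_eq_cons_cons_of_sum_map_sq_eq {r : ℝ} (hr : 0 ≤ r) {s : Multiset ℝ}
    (hs : ∀ t ∈ s, 0 ≤ t) (hsq : (s.map (· ^ 2)).sum = card s * r ^ 2) (hcard : 2 ≤ card s) :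
    ∃ a b t, s = a ::ₘ b ::ₘ t ∧ b ≤ r ∧ r ≤ a := by
  obtain ⟨a, ha, hra⟩ := exists_le_of_card_nsmul_le_sum_map (s := s) (card_pos.1 (by omega))
    (f := (· ^ 2)) (c := r ^ 2) (by rw [nsmul_eq_mul, hsq])
  obtain ⟨s, rfl⟩ : ∃ s', s = a ::ₘ s' := ⟨_, (cons_erase ha).symm⟩
  simp only [map_cons, sum_cons, card_cons, Nat.cast_add, Nat.cast_one] at hsq hcard
  obtain ⟨b, hb, hbr⟩ := exists_le_of_sum_map_le_card_nsmul (s := s) (card_pos.1 (by omega))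
    (f := (· ^ 2)) (c := r ^ 2) (by rw [nsmul_eq_mul]; nlinarith)
  exact ⟨a, b, s.erase b, by rw [cons_erase hb], (sq_le_sq₀ (hs b (mem_cons_of_mem hb)) hr).1 hbr,
    (sq_le_sq₀ hr (hs a (mem_cons_self a s))).1 hra⟩

theorem pow_card_le_prod_map_one_sub {r : ℝ} (hr : 0 ≤ r) {s : Multiset ℝ}
    (hs : ∀ t ∈ s, 0 ≤ t) (hsq : (s.map (· ^ 2)).sum = card s * r ^ 2)
    (hhalf : card s * r ^ 2 ≤ 1 / 2) :
    (1 - r) ^ card s ≤ (s.map (1 - ·)).prod := by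
  obtain ⟨n, hn⟩ : ∃ n, card s = n := ⟨_, rfl⟩
  induction n using Nat.strong_induction_on generalizing s with | _ n ih => ?_
  match n, hn with
  | 0, hn => simp [card_eq_zero.1 hn]
  | 1, hn =>
    obtain ⟨a, rfl⟩ := card_eq_one.1 hn
    have : a = r := (sq_eq_sq₀ (hs a (mem_singleton_self a)) hr).1 (by simpa using hsq)
    simp [this]
  | n + 2, hn =>
    obtain ⟨a, b, s, rfl, hbr, hra⟩ := exists_eq_cons_cons_of_sum_map_sq_eq hr hs hsq (by omega)
    simp only [card_cons, Nat.add_right_cancel_iff] at hn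
    subst hn
    simp only [map_cons, sum_cons, prod_cons, mem_cons, forall_eq_or_imp, card_cons]
      at hsq hs hhalf ⊢
    push_cast at hsq hhalf
    have hsum_nonneg : 0 ≤ (s.map (· ^ 2)).sum := sum_nonneg (by simp [sq_nonneg])
    set w := √(a ^ 2 + b ^ 2 - r ^ 2)
    have hw : w ^ 2 = a ^ 2 + b ^ 2 - r ^ 2 := sq_sqrt (by nlinarith)
    have hsmooth : (1 - r) * (1 - w) ≤ (1 - a) * (1 - b) :=
      one_sub_mul_one_sub_le_of_sq_add_sq_eq hs.2.1 (sqrt_nonneg _) hbr hra (by rw [hw]; ring)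
        (by nlinarith)
    have hind : (1 - r) ^ (card s + 1) ≤ (1 - w) * (s.map (1 - ·)).prod := by
      simpa using ih (card s + 1) (by omega) (s := w ::ₘ s) (by simpa using ⟨sqrt_nonneg _, hs.2.2⟩)
        (by simp only [map_cons, sum_cons, card_cons]; push_cast; linarith)
        (by simp only [card_cons]; push_cast; nlinarith) (card_cons w s)
    calc (1 - r) ^ (card s + 1 + 1) = (1 - r) * (1 - r) ^ (card s + 1) := pow_succ' _ _
      _ ≤ (1 - r) * ((1 - w) * (s.map (1 - ·)).prod) := by
        gcongr
        nlinarith [(card s).cast_nonneg (α := ℝ)]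
      _ ≤ (1 - a) * ((1 - b) * (s.map (1 - ·)).prod) := by
        rw [← mul_assoc, ← mul_assoc]
        gcongr
        exact prod_map_one_sub_nonneg_of_sum_map_sq_le_half (by nlinarith)

end Multiset

section

variable {ι : Type*} [Fintype ι] {x : ι → ℝ} {u : ℝ}

theorem pow_card_le_prod_of_sum_sq_sub_one_le [Nonempty ι] (hu : 0 ≤ u) (hu1 : u ≤ 1)
    (hsq : ∑ i, (x i - 1) ^ 2 ≤ Fintype.card ι * u ^ 2) (hhalf : ∑ i, (x i - 1) ^ 2 ≤ 1 / 2) :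
    (1 - u) ^ Fintype.card ι ≤ ∏ i, x i := by
  have hcard : (0 : ℝ) < Fintype.card ι := Nat.cast_pos.2 Fintype.card_pos
  set r := √((∑ i, (x i - 1) ^ 2) / Fintype.card ι)
  have hr : Fintype.card ι * r ^ 2 = ∑ i, (x i - 1) ^ 2 := by
    rw [sq_sqrt (by positivity), mul_div_cancel₀ _ hcard.ne']
  have hru : r ≤ u := (sqrt_le_left hu).2 <| by rwa [div_le_iff₀' hcard]
  have hr0 : 0 ≤ r := sqrt_nonneg _
  clear_value r
  have hsmooth : (1 - r) ^ Fintype.card ι ≤ ∏ i, (1 - |x i - 1|) := by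
    simpa [Function.comp_def, prod_map_val, sum_map_val] using
      Multiset.pow_card_le_prod_map_one_sub hr0
        (s := univ.val.map fun i => |x i - 1|) (by simp) (by simpa using hr.symm)
        (by simpa [hr] using hhalf)
  have hnonneg (i : ι) : 0 ≤ 1 - |x i - 1| := by
    have := (single_le_sum (fun j _ => sq_nonneg (x j - 1)) (mem_univ i)).trans hhalf
    nlinarith [sq_abs (x i - 1), abs_nonneg (x i - 1)]
  calc (1 - u) ^ Fintype.card ι ≤ (1 - r) ^ Fintype.card ι := by gcongr
    _ ≤ ∏ i, (1 - |x i - 1|) := hsmooth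
    _ ≤ ∏ i, x i :=
      prod_le_prod (fun i _ => hnonneg i) fun i _ => by linarith [neg_abs_le (x i - 1)]

theorem card_mul_log_one_sub_le_sum_log [Nonempty ι] (hx : ∀ i, 0 < x i)
    (hu : 0 ≤ u) (hu1 : u < 1) (hsq : ∑ i, (x i - 1) ^ 2 ≤ Fintype.card ι * u ^ 2)
    (hhalf : ∑ i, (x i - 1) ^ 2 ≤ 1 / 2) :
    Fintype.card ι * log (1 - u) ≤ ∑ i, log (x i) := by
  rw [← log_pow, ← log_prod fun i _ => (hx i).ne']
  exact log_le_log (pow_pos (by linarith) _)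
    (pow_card_le_prod_of_sum_sq_sub_one_le hu hu1.le hsq hhalf)

theorem sum_log_le_card_mul (hx : ∀ i, 0 < x i) (hu : 0 ≤ u)
    (hsq : ∑ i, (x i - 1) ^ 2 ≤ Fintype.card ι * u ^ 2) :
    ∑ i, log (x i) ≤ Fintype.card ι * u := by
  have hcs : (∑ i, (x i - 1)) ^ 2 ≤ (Fintype.card ι * u) ^ 2 :=
    calc (∑ i, (x i - 1)) ^ 2 ≤ Fintype.card ι * ∑ i, (x i - 1) ^ 2 := by
          simpa using sq_sum_le_card_mul_sum_sq (s := univ) (f := fun i => x i - 1)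
      _ ≤ Fintype.card ι * (Fintype.card ι * u ^ 2) := by gcongr
      _ = (Fintype.card ι * u) ^ 2 := by ring
  calc ∑ i, log (x i) ≤ ∑ i, (x i - 1) := sum_le_sum fun i _ => log_le_sub_one_of_pos (hx i)
    _ ≤ Fintype.card ι * u := (abs_le_of_sq_le_sq' hcs (by positivity)).2

end

open Finset in
/-- If positive reals `x₁, …, xₙ` satisfy `∑ (xᵢ - 1)² ≤ ε` with `0 < ε < 1/2` and `ε < n`,
then `|∑ log xᵢ| ≤ -n log(1 - √(ε/n))`. -/
theorem abs_sum_log_le (n : ℕ) (hn : 0 < n) (x : Fin n → ℝ) (hx : ∀ i, 0 < x i)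
    (ε : ℝ) (hε0 : 0 < ε) (hε : ε < 1 / 2) (hεn : ε < n)
    (hsum : ∑ i, (x i - 1) ^ 2 ≤ ε) :
    |∑ i, Real.log (x i)| ≤ -(n : ℝ) * Real.log (1 - Real.sqrt (ε / n)) := by
  have hn' : (0 : ℝ) < n := Nat.cast_pos.2 hn
  have : Nonempty (Fin n) := ⟨⟨0, hn⟩⟩
  set u := √(ε / n)
  have hu : 0 ≤ u := sqrt_nonneg _
  have hu1 : u < 1 := (sqrt_lt' one_pos).2 <| by rw [one_pow]; exact (div_lt_one hn').2 hεn
  have hsq : ∑ i, (x i - 1) ^ 2 ≤ Fintype.card (Fin n) * u ^ 2 := by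
    rwa [Fintype.card_fin, sq_sqrt (by positivity), mul_div_cancel₀ _ hn'.ne']
  have hlower := card_mul_log_one_sub_le_sum_log hx hu hu1 hsq (by linarith)
  have hupper := sum_log_le_card_mul hx hu hsq
  have hlog : log (1 - u) ≤ -u := by linarith [log_le_sub_one_of_pos (by linarith : 0 < 1 - u)]
  rw [Fintype.card_fin] at hlower hupper
  exact abs_le.2 ⟨by linarith, by linarith [mul_le_mul_of_nonneg_left hlog hn'.le]⟩
end

section
/- (One-dimensional main theorem.) Let N₁ = N(μ₁, σ₁²) and N₂ = N(μ₂, σ₂²) be one-dimensional Gaussians, and let P be a probability distribution on ℝ with finite second moment m₂ = E_P[x²]. There exists a constant K, depending only on μ₁, μ₂, σ₁, σ₂, and m₂, such that whenever KL(P||N₁) > C and KL(N₁||N₂) ≤ ε with ε < 1/12, one has KL(P||N₂) ≥ C - K√ε. -/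
open MeasureTheory ProbabilityTheory Classical

/-- Kullback-Leibler divergence of `P` from `Q`, valued in `EReal`:
`∫ log (dP/dQ) dP` when `P ≪ Q` and the integrand is integrable, `+∞` otherwise. -/
noncomputable def klDiv {α : Type*} [MeasurableSpace α] (P Q : Measure α) : EReal :=
  if P ≪ Q ∧ Integrable (fun x => Real.log (P.rnDeriv Q x).toReal) P then
    ((∫ x, Real.log (P.rnDeriv Q x).toReal ∂P : ℝ) : EReal)
  else ⊤

open Real
open scoped NNReal

/-!
Write `L = log (dN₁/dN₂)`, an explicit quadratic in `x`. The chain rule for Radon–Nikodym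
derivatives gives `KL(P‖N₂) = KL(P‖N₁) + E_P[L]`, so it suffices to bound `E_P[L]` from below.
Taking `P = N₁` gives the closed form of `KL(N₁‖N₂)`: it is `(μ₁ - μ₂)² / (2σ₂²)` plus
`(t - 1 - log t) / 2` with `t = σ₁² / σ₂²`, and `t - 1 - log t ≥ (√t - 1)²`. Hence
`KL(N₁‖N₂) ≤ ε ≤ 1/8` forces `μ₁ - μ₂`, `t - 1` and `log t` to be `O(√ε)`, so every coefficient of
`L` is `O(√ε)`: `|L x| ≤ √ε · c · (1 + x²)`, and integrating against `P` bounds `|E_P[L]|` by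
`√ε · c · (1 + m₂)`.
-/

section KullbackLeibler

variable {α : Type*} [MeasurableSpace α]

lemma klDiv_self (N : Measure α) [SigmaFinite N] : klDiv N N = 0 := by
  have hlog : (fun x => log (N.rnDeriv N x).toReal) =ᵐ[N] 0 := by
    filter_upwards [Measure.rnDeriv_self N] with x hx
    simp [hx]
  rw [klDiv, if_pos ⟨Measure.AbsolutelyContinuous.rfl, (integrable_zero _ _ _).congr hlog.symm⟩,
    integral_congr_ae hlog]
  simp

lemma klDiv_eq_klDiv_add_integral {P N₁ N₂ : Measure α} [SigmaFinite P] [SigmaFinite N₁]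
    [SigmaFinite N₂] (h₁₂ : N₁ ≪ N₂) (h₂₁ : N₂ ≪ N₁) {f : α → ℝ}
    (hf : ∀ᵐ x ∂N₁, log (N₁.rnDeriv N₂ x).toReal = f x) (hfP : Integrable f P) :
    klDiv P N₂ = klDiv P N₁ + ∫ x, f x ∂P := by
  by_cases hP : P ≪ N₁
  swap
  · have hP₂ : ¬ P ≪ N₂ := fun h => hP (h.trans h₂₁)
    simp [klDiv, hP, hP₂]
  have hlog : (fun x => log (P.rnDeriv N₂ x).toReal)
      =ᵐ[P] fun x => log (P.rnDeriv N₁ x).toReal + f x := by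
    filter_upwards [(hP.trans h₁₂).ae_le (Measure.rnDeriv_mul_rnDeriv hP), hP.ae_le hf,
      Measure.rnDeriv_pos hP, hP.ae_le (Measure.rnDeriv_ne_top P N₁),
      hP.ae_le (Measure.rnDeriv_pos h₁₂), (hP.trans h₁₂).ae_le (Measure.rnDeriv_ne_top N₁ N₂)]
      with x hchain hfx hpos₁ htop₁ hpos₂ htop₂
    rw [← hchain, Pi.mul_apply, ENNReal.toReal_mul,
      log_mul (ENNReal.toReal_pos hpos₁.ne' htop₁).ne' (ENNReal.toReal_pos hpos₂.ne' htop₂).ne',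
      hfx]
  have hint : Integrable (fun x => log (P.rnDeriv N₂ x).toReal) P ↔
      Integrable (fun x => log (P.rnDeriv N₁ x).toReal) P :=
    ⟨fun h => (h.sub hfP).congr (hlog.mono fun x hx => by simp [hx]),
      fun h => (h.add hfP).congr hlog.symm⟩
  simp only [klDiv, hP, hP.trans h₁₂, true_and, hint]
  split_ifs with h
  · rw [integral_congr_ae hlog, integral_add h hfP, EReal.coe_add]
  · exact (EReal.top_add_coe _).symm

end KullbackLeibler

lemma EReal.coe_sub_le_add_of_lt {x : EReal} {C a b : ℝ} (hx : (C : EReal) < x)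
    (hab : -a ≤ b) : ((C - a : ℝ) : EReal) ≤ x + b := by
  induction x using EReal.rec with
  | bot => exact absurd hx not_lt_bot
  | coe x =>
    rw [← EReal.coe_add, EReal.coe_le_coe_iff]
    rw [EReal.coe_lt_coe_iff] at hx
    linarith
  | top => simp

lemma sq_sqrt_sub_one_le_sub_log {t : ℝ} (ht : 0 < t) : (√t - 1) ^ 2 ≤ t - 1 - log t := by
  nlinarith [sq_sqrt ht.le, log_le_sub_one_of_pos (sqrt_pos.2 ht), log_sqrt ht.le]

lemma abs_sub_one_le_and_abs_log_le {t η : ℝ} (ht : 0 < t) (hη : 0 ≤ η) (hη' : η ≤ 1 / 2)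
    (h : t - 1 - log t ≤ η ^ 2) : |t - 1| ≤ 5 / 2 * η ∧ |log t| ≤ 4 * η := by
  have hs : 0 < √t := sqrt_pos.2 ht
  obtain ⟨hs₁, hs₂⟩ := abs_le_of_sq_le_sq' ((sq_sqrt_sub_one_le_sub_log ht).trans h) hη
  have hlog_le : log √t ≤ √t - 1 := log_le_sub_one_of_pos hs
  -- `-log √t ≤ 1/√t - 1 = (1 - √t)/√t ≤ 2η` since `√t ≥ 1/2`
  have hlog_ge : -(2 * η) ≤ log √t := by
    have := one_sub_inv_le_log_of_pos hs
    have : 1 - (√t)⁻¹ = -((1 - √t) / √t) := by field_simp; ring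
    have : (1 - √t) / √t ≤ 2 * η := by rw [div_le_iff₀ hs]; nlinarith
    linarith
  constructor
  · rw [abs_le]
    constructor <;> nlinarith [sq_sqrt ht.le]
  · rw [← sq_sqrt ht.le, log_pow, abs_le]
    constructor <;> push_cast <;> linarith

lemma sq_sub_le_mul_one_add_sq (x a : ℝ) : (x - a) ^ 2 ≤ 2 * (1 + a ^ 2) * (1 + x ^ 2) := by
  nlinarith [sq_nonneg (x + a), sq_nonneg (x * a)]

lemma abs_two_mul_sub_le_mul_one_add_sq (x a : ℝ) : |2 * x - a| ≤ (1 + |a|) * (1 + x ^ 2) := by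
  have h2x : 2 * |x| ≤ 1 + x ^ 2 := by nlinarith [sq_nonneg (|x| - 1), sq_abs x]
  calc |2 * x - a| ≤ 2 * |x| + |a| := by
        simpa [abs_mul] using abs_sub (2 * x) a
    _ ≤ (1 + |a|) * (1 + x ^ 2) := by nlinarith [abs_nonneg a, sq_nonneg x]

lemma abs_integral_le_of_abs_le_mul_one_add_sq {P : Measure ℝ} [IsProbabilityMeasure P]
    (hP : Integrable (fun x => x ^ 2) P) {f : ℝ → ℝ} {a : ℝ} (hf : ∀ x, |f x| ≤ a * (1 + x ^ 2)) :
    |∫ x, f x ∂P| ≤ a * (1 + ∫ x, x ^ 2 ∂P) := by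
  have hg : Integrable (fun x => a * (1 + x ^ 2)) P := ((integrable_const 1).add hP).const_mul a
  calc |∫ x, f x ∂P| ≤ ∫ x, a * (1 + x ^ 2) ∂P := by
        simp_rw [← Real.norm_eq_abs] at hf ⊢
        exact norm_integral_le_of_norm_le hg (ae_of_all _ hf)
    _ = a * (1 + ∫ x, x ^ 2 ∂P) := by
        rw [integral_const_mul, integral_add (integrable_const 1) hP, integral_const]
        simp

section Gaussian

variable {μ μ₁ μ₂ : ℝ} {v v₁ v₂ : ℝ≥0}

lemma integral_sq_gaussianReal : ∫ x, x ^ 2 ∂gaussianReal μ v = v + μ ^ 2 := by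
  have h := variance_eq_sub (memLp_id_gaussianReal (μ := μ) (v := v) 2)
  simp only [variance_id_gaussianReal, id_eq, integral_id_gaussianReal, Pi.pow_apply] at h
  linarith

lemma integral_sub_sq_gaussianReal (c : ℝ) :
    ∫ x, (x - c) ^ 2 ∂gaussianReal μ v = v + (μ - c) ^ 2 := by
  rw [← integral_sq_gaussianReal, ← gaussianReal_map_sub_const c,
    integral_map (by fun_prop) (by fun_prop)]

/-- The log-likelihood ratio `log (dN(μ₁, v₁)/dN(μ₂, v₂))`. -/
noncomputable def gaussianLogRatio (μ₁ μ₂ v₁ v₂ x : ℝ) : ℝ :=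
  (log (v₂ / v₁) + (x - μ₂) ^ 2 / v₂ - (x - μ₁) ^ 2 / v₁) / 2

lemma log_gaussianPDFReal (hv : v ≠ 0) (x : ℝ) :
    log (gaussianPDFReal μ v x) = -(log (2 * π) + log v) / 2 - (x - μ) ^ 2 / (2 * v) := by
  have hv' : 0 < (v : ℝ) := by positivity
  rw [gaussianPDFReal, log_mul (by positivity) (exp_ne_zero _), log_exp, log_inv,
    log_sqrt (by positivity), log_mul (by positivity) hv'.ne']
  ring

lemma log_rnDeriv_gaussianReal (hv₁ : v₁ ≠ 0) (hv₂ : v₂ ≠ 0) :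
    ∀ᵐ x, log ((gaussianReal μ₁ v₁).rnDeriv (gaussianReal μ₂ v₂) x).toReal
      = gaussianLogRatio μ₁ μ₂ v₁ v₂ x := by
  have hratio := Measure.rnDeriv_eq_div (gaussianReal_absolutelyContinuous μ₁ hv₁)
    (gaussianReal_absolutelyContinuous μ₂ hv₂)
  filter_upwards [(gaussianReal_absolutelyContinuous' μ₂ hv₂).ae_le hratio,
    rnDeriv_gaussianReal μ₁ v₁, rnDeriv_gaussianReal μ₂ v₂] with x hx h₁ h₂
  have hv₁' : 0 < (v₁ : ℝ) := by positivity
  have hv₂' : 0 < (v₂ : ℝ) := by positivity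
  rw [hx, h₁, h₂, ENNReal.toReal_div, toReal_gaussianPDF, toReal_gaussianPDF,
    log_div (gaussianPDFReal_pos _ _ _ hv₁).ne' (gaussianPDFReal_pos _ _ _ hv₂).ne',
    log_gaussianPDFReal hv₁, log_gaussianPDFReal hv₂, gaussianLogRatio,
    log_div hv₂'.ne' hv₁'.ne']
  ring

lemma integrable_gaussianLogRatio {P : Measure ℝ} [IsFiniteMeasure P] (hP : MemLp id 2 P)
    (μ₁ μ₂ v₁ v₂ : ℝ) : Integrable (gaussianLogRatio μ₁ μ₂ v₁ v₂) P := by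
  have hsq (c : ℝ) : Integrable (fun x => (x - c) ^ 2) P :=
    (hP.sub (memLp_const c)).integrable_sq
  exact (((integrable_const _).add ((hsq μ₂).div_const _)).sub ((hsq μ₁).div_const _)).div_const _

lemma klDiv_gaussianReal_right {P : Measure ℝ} [IsFiniteMeasure P] (hP : MemLp id 2 P)
    (hv₁ : v₁ ≠ 0) (hv₂ : v₂ ≠ 0) :
    klDiv P (gaussianReal μ₂ v₂)
      = klDiv P (gaussianReal μ₁ v₁) + ∫ x, gaussianLogRatio μ₁ μ₂ v₁ v₂ x ∂P :=
  klDiv_eq_klDiv_add_integral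
    ((gaussianReal_absolutelyContinuous μ₁ hv₁).trans (gaussianReal_absolutelyContinuous' μ₂ hv₂))
    ((gaussianReal_absolutelyContinuous μ₂ hv₂).trans (gaussianReal_absolutelyContinuous' μ₁ hv₁))
    ((gaussianReal_absolutelyContinuous μ₁ hv₁).ae_le (log_rnDeriv_gaussianReal hv₁ hv₂))
    (integrable_gaussianLogRatio hP _ _ _ _)

lemma klDiv_gaussianReal (hv₁ : v₁ ≠ 0) (hv₂ : v₂ ≠ 0) :
    klDiv (gaussianReal μ₁ v₁) (gaussianReal μ₂ v₂)
      = ((log (v₂ / v₁) + (v₁ + (μ₁ - μ₂) ^ 2) / v₂ - 1) / 2 : ℝ) := by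
  have hsq (c w : ℝ) : Integrable (fun x => (x - c) ^ 2 / w) (gaussianReal μ₁ v₁) :=
    ((memLp_id_gaussianReal 2).sub (memLp_const c)).integrable_sq.div_const w
  have hv₁' : 0 < (v₁ : ℝ) := by positivity
  rw [klDiv_gaussianReal_right (memLp_id_gaussianReal 2) hv₁ hv₂, klDiv_self, zero_add,
    EReal.coe_eq_coe_iff]
  unfold gaussianLogRatio
  rw [integral_div, integral_sub ((integrable_const _).fun_add (hsq _ _)) (hsq _ _),
    integral_add (integrable_const _) (hsq _ _), integral_div, integral_div, integral_const,
    probReal_univ, one_smul, integral_sub_sq_gaussianReal, integral_sub_sq_gaussianReal]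
  field_simp
  ring

lemma gaussian_param_bounds_of_kl_le {μ₁ μ₂ v₁ v₂ ε : ℝ} (hv₁ : 0 < v₁) (hv₂ : 0 < v₂)
    (hε : ε ≤ 1 / 8) (h : (log (v₂ / v₁) + (v₁ + (μ₁ - μ₂) ^ 2) / v₂ - 1) / 2 ≤ ε) :
    |μ₁ - μ₂| ≤ √(2 * ε) * √v₂ ∧ |v₁ / v₂ - 1| ≤ 5 / 2 * √(2 * ε) ∧
      |log (v₁ / v₂)| ≤ 4 * √(2 * ε) := by
  have ht : 0 < v₁ / v₂ := div_pos hv₁ hv₂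
  have hsplit : (μ₁ - μ₂) ^ 2 / v₂ + (v₁ / v₂ - 1 - log (v₁ / v₂)) ≤ 2 * ε := by
    have hlog : log (v₂ / v₁) = -log (v₁ / v₂) := by rw [← log_inv, inv_div]
    linarith [add_div v₁ ((μ₁ - μ₂) ^ 2) v₂]
  have hmean : 0 ≤ (μ₁ - μ₂) ^ 2 / v₂ := by positivity
  have hvar : 0 ≤ v₁ / v₂ - 1 - log (v₁ / v₂) := by linarith [log_le_sub_one_of_pos ht]
  have hη : √(2 * ε) ^ 2 = 2 * ε := sq_sqrt (by linarith)
  have hη' : √(2 * ε) ≤ 1 / 2 := (sqrt_le_left (by norm_num)).2 (by linarith)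
  refine ⟨?_, abs_sub_one_le_and_abs_log_le ht (sqrt_nonneg _) hη' (by linarith)⟩
  rw [← sqrt_mul (by linarith), ← sqrt_sq_eq_abs]
  exact sqrt_le_sqrt ((div_le_iff₀ hv₂).1 (by linarith))

lemma exists_abs_gaussianLogRatio_le (μ₁ μ₂ : ℝ) {v₁ v₂ : ℝ} (hv₁ : 0 < v₁) :
    ∃ c, ∀ η x, |μ₁ - μ₂| ≤ η * √v₂ → |v₁ / v₂ - 1| ≤ 5 / 2 * η → |log (v₁ / v₂)| ≤ 4 * η →
      |gaussianLogRatio μ₁ μ₂ v₁ v₂ x| ≤ η * c * (1 + x ^ 2) := by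
  refine ⟨2 + (5 * (1 + μ₂ ^ 2) + √v₂ * (1 + |μ₁ + μ₂|)) / (2 * v₁),
    fun η x hμ hv hlog => ?_⟩
  have hη : 0 ≤ η := by linarith [abs_nonneg (log (v₁ / v₂))]
  have hL : gaussianLogRatio μ₁ μ₂ v₁ v₂ x = (-log (v₁ / v₂)
      + (v₁ / v₂ - 1) * (x - μ₂) ^ 2 / v₁ + (μ₁ - μ₂) * (2 * x - (μ₁ + μ₂)) / v₁) / 2 := by
    rw [gaussianLogRatio, ← log_inv, inv_div]
    field_simp
    ring
  calc |gaussianLogRatio μ₁ μ₂ v₁ v₂ x|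
      ≤ (|log (v₁ / v₂)| + |v₁ / v₂ - 1| * (x - μ₂) ^ 2 / v₁
          + |μ₁ - μ₂| * |2 * x - (μ₁ + μ₂)| / v₁) / 2 := by
        rw [hL, abs_div, abs_two]
        gcongr
        refine (abs_add_three _ _ _).trans ?_
        rw [abs_neg, abs_div, abs_div, abs_mul, abs_mul, abs_of_pos hv₁, abs_sq]
    _ ≤ (4 * η * (1 + x ^ 2) + 5 / 2 * η * (2 * (1 + μ₂ ^ 2) * (1 + x ^ 2)) / v₁
          + η * √v₂ * ((1 + |μ₁ + μ₂|) * (1 + x ^ 2)) / v₁) / 2 := by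
        gcongr
        · exact hlog.trans (le_mul_of_one_le_right (by positivity) (by nlinarith))
        · exact sq_sub_le_mul_one_add_sq x μ₂
        · exact abs_two_mul_sub_le_mul_one_add_sq x (μ₁ + μ₂)
    _ = η * (2 + (5 * (1 + μ₂ ^ 2) + √v₂ * (1 + |μ₁ + μ₂|)) / (2 * v₁)) * (1 + x ^ 2) := by
        field_simp
        ring

end Gaussian

/-- One-dimensional main theorem: for Gaussians `N₁ = N(μ₁,σ₁²)`, `N₂ = N(μ₂,σ₂²)`
there is a constant `K`, depending only on `μ₁, μ₂, σ₁, σ₂` and the second moment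
`m₂ = E_P[x²]`, such that whenever `KL(P‖N₁) > C` and `KL(N₁‖N₂) ≤ ε < 1/12`,
`KL(P‖N₂) ≥ C - K√ε`. -/
theorem kl_stability_one_dim (μ₁ μ₂ σ₁ σ₂ : ℝ) (hσ₁ : 0 < σ₁) (hσ₂ : 0 < σ₂)
    (m₂ : ℝ) :
    ∃ K : ℝ, ∀ P : Measure ℝ, IsProbabilityMeasure P →
      Integrable (fun x => x ^ 2) P → (∫ x, x ^ 2 ∂P) = m₂ →
      ∀ C ε : ℝ, ε < 1 / 12 →
        (C : EReal) < klDiv P (gaussianReal μ₁ (Real.toNNReal (σ₁ ^ 2))) →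
        klDiv (gaussianReal μ₁ (Real.toNNReal (σ₁ ^ 2)))
            (gaussianReal μ₂ (Real.toNNReal (σ₂ ^ 2))) ≤ (ε : EReal) →
        ((C - K * Real.sqrt ε : ℝ) : EReal)
          ≤ klDiv P (gaussianReal μ₂ (Real.toNNReal (σ₂ ^ 2))) := by
  have hw₁ : 0 < σ₁ ^ 2 := by positivity
  have hw₂ : 0 < σ₂ ^ 2 := by positivity
  obtain ⟨c, hc⟩ := exists_abs_gaussianLogRatio_le μ₁ μ₂ hw₁
  refine ⟨√2 * c * (1 + m₂), fun P _ hx2 hm₂ C ε hε hC hKL => ?_⟩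
  have hv₁ : (σ₁ ^ 2).toNNReal ≠ 0 := by simpa using hσ₁.ne'
  have hv₂ : (σ₂ ^ 2).toNNReal ≠ 0 := by simpa using hσ₂.ne'
  rw [klDiv_gaussianReal hv₁ hv₂, EReal.coe_le_coe_iff, coe_toNNReal _ hw₁.le,
    coe_toNNReal _ hw₂.le] at hKL
  obtain ⟨hμ, hv, hlog⟩ := gaussian_param_bounds_of_kl_le hw₁ hw₂ (by linarith) hKL
  have hint := abs_integral_le_of_abs_le_mul_one_add_sq hx2 (hc _ · hμ hv hlog)
  rw [hm₂, sqrt_mul zero_le_two] at hint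
  have hP : MemLp id 2 P := (memLp_two_iff_integrable_sq measurable_id.aestronglyMeasurable).2 hx2
  rw [klDiv_gaussianReal_right hP hv₁ hv₂, coe_toNNReal _ hw₁.le, coe_toNNReal _ hw₂.le]
  refine EReal.coe_sub_le_add_of_lt hC ?_
  linarith [neg_abs_le (∫ x, gaussianLogRatio μ₁ μ₂ (σ₁ ^ 2) (σ₂ ^ 2) x ∂P)]
end

section
/- (Tightness of the √ε rate.) Fix C > 0 and let t = √(2C). For every ε > 0, setting δ = √(2ε), N₁ = N(0,1), N₂ = N(δ,1), and P = N(t,1) (all one-dimensional standard-variance Gaussians), one has KL(N₁||N₂) = ε, KL(P||N₁) = C, and KL(P||N₂) = C - 2√(Cε) + ε. In particular KL(P||N₁) - KL(P||N₂) = 2√(Cε) - ε, which is of exact order √ε as ε → 0. -/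
open MeasureTheory ProbabilityTheory Classical

open Real
open scoped ENNReal NNReal

namespace KLAux

lemma gauss_eq (a : ℝ) : gaussianReal a 1 =
    volume.withDensity (fun x => ((Real.toNNReal (gaussianPDFReal a 1 x) : ℝ≥0) : ℝ≥0∞)) := by
  rw [gaussianReal_of_var_ne_zero a one_ne_zero]
  congr 1

lemma integral_gauss (a : ℝ) (g : ℝ → ℝ) :
    ∫ x, g x ∂(gaussianReal a 1) = ∫ x, gaussianPDFReal a 1 x * g x := by
  rw [gauss_eq, integral_withDensity_eq_integral_smul
    ((measurable_gaussianPDFReal a 1).real_toNNReal)]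
  congr 1
  ext x
  simp [NNReal.smul_def, Real.coe_toNNReal _ (gaussianPDFReal_nonneg a 1 x)]

lemma integrable_gauss_iff (a : ℝ) (g : ℝ → ℝ) :
    Integrable g (gaussianReal a 1) ↔
      Integrable (fun x => gaussianPDFReal a 1 x * g x) volume := by
  rw [gauss_eq, integrable_withDensity_iff_integrable_smul
    ((measurable_gaussianPDFReal a 1).real_toNNReal)]
  constructor <;> intro h <;> refine h.congr (Filter.Eventually.of_forall fun x => ?_) <;>
    simp [NNReal.smul_def, Real.coe_toNNReal _ (gaussianPDFReal_nonneg a 1 x)]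

lemma pdf_shift (a x : ℝ) : gaussianPDFReal a 1 (x + a) = gaussianPDFReal 0 1 x := by
  simp [gaussianPDFReal]

lemma int_mul0 : Integrable (fun x : ℝ => gaussianPDFReal 0 1 x * x) := by
  have h : (fun x : ℝ => gaussianPDFReal 0 1 x * x)
      = fun x => (√(2*π))⁻¹ * (x * rexp (-(1/2) * x^2)) := by
    ext x
    rw [gaussianPDFReal]
    push_cast
    ring_nf
  rw [h]
  exact (integrable_mul_exp_neg_mul_sq (by norm_num : (0:ℝ) < 1/2)).const_mul _

lemma integral_mul0 : ∫ x : ℝ, gaussianPDFReal 0 1 x * x = 0 := by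
  have h := MeasureTheory.integral_neg_eq_self (fun x : ℝ => gaussianPDFReal 0 1 x * x) volume
  have h2 : ∫ x : ℝ, gaussianPDFReal 0 1 (-x) * (-x)
      = ∫ x : ℝ, -(gaussianPDFReal 0 1 x * x) := by
    congr 1; ext x
    have : gaussianPDFReal 0 1 (-x) = gaussianPDFReal 0 1 x := by simp [gaussianPDFReal]
    rw [this]; ring
  rw [h2, integral_neg] at h
  linarith

lemma int_mul (a : ℝ) : Integrable (fun x : ℝ => gaussianPDFReal a 1 x * x) := by
  have h : Integrable (fun x : ℝ => gaussianPDFReal a 1 (x + a) * (x + a)) := by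
    simp_rw [pdf_shift]
    have := int_mul0.add ((integrable_gaussianPDFReal 0 1).const_mul a)
    refine this.congr (Filter.Eventually.of_forall fun x => ?_)
    simp; ring
  have := h.comp_add_right (-a)
  refine this.congr (Filter.Eventually.of_forall fun x => ?_)
  simp

lemma integral_mul (a : ℝ) : ∫ x : ℝ, gaussianPDFReal a 1 x * x = a := by
  rw [← MeasureTheory.integral_add_right_eq_self (fun x => gaussianPDFReal a 1 x * x) a]
  simp_rw [pdf_shift]
  have h : (fun x : ℝ => gaussianPDFReal 0 1 x * (x + a))
      = fun x => gaussianPDFReal 0 1 x * x + a * gaussianPDFReal 0 1 x := by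
    ext x; ring
  rw [h, integral_add int_mul0 ((integrable_gaussianPDFReal 0 1).const_mul a),
    integral_mul0, MeasureTheory.integral_const_mul, integral_gaussianPDFReal_eq_one 0 one_ne_zero]
  ring

lemma integrable_id_gauss (a : ℝ) : Integrable (fun x : ℝ => x) (gaussianReal a 1) := by
  rw [integrable_gauss_iff]
  exact int_mul a

lemma integral_id_gauss (a : ℝ) : ∫ x : ℝ, x ∂(gaussianReal a 1) = a := by
  rw [integral_gauss]; exact integral_mul a

lemma rnDeriv_ae (a b : ℝ) :
    (fun x => Real.log (((gaussianReal a 1).rnDeriv (gaussianReal b 1) x).toReal))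
      =ᵐ[gaussianReal a 1]
      fun x => (a - b) * x + (b^2 - a^2) / 2 := by
  have hvolQ : volume ≪ gaussianReal b 1 := gaussianReal_absolutelyContinuous' b one_ne_zero
  have hPvol : gaussianReal a 1 ≪ volume := gaussianReal_absolutelyContinuous a one_ne_zero
  have hPQ : gaussianReal a 1 ≪ gaussianReal b 1 := hPvol.trans hvolQ
  have h1 : (gaussianReal a 1).rnDeriv (gaussianReal b 1)
      =ᵐ[gaussianReal b 1] fun x => gaussianPDF a 1 x * volume.rnDeriv (gaussianReal b 1) x := by
    rw [gaussianReal_of_var_ne_zero a one_ne_zero]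
    exact MeasureTheory.Measure.rnDeriv_withDensity_left_of_absolutelyContinuous hvolQ
      (measurable_gaussianPDF a 1).aemeasurable
  have h2 : volume.rnDeriv (gaussianReal b 1)
      =ᵐ[volume] fun x => (gaussianPDF b 1 x)⁻¹ * volume.rnDeriv volume x := by
    rw [gaussianReal_of_var_ne_zero b one_ne_zero]
    exact MeasureTheory.Measure.rnDeriv_withDensity_right (volume : Measure ℝ) volume
      (measurable_gaussianPDF b 1).aemeasurable
      (Filter.Eventually.of_forall fun x => (gaussianPDF_pos b one_ne_zero x).ne')
      (Filter.Eventually.of_forall fun x => ENNReal.ofReal_ne_top)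
  have h3 : volume.rnDeriv volume =ᵐ[volume] 1 := MeasureTheory.Measure.rnDeriv_self (volume : Measure ℝ)
  filter_upwards [hPQ.ae_eq h1, hPvol.ae_eq h2, hPvol.ae_eq h3] with x hx1 hx2 hx3
  rw [hx1, hx2, hx3]
  simp only [Pi.one_apply, mul_one]
  have hpa := gaussianPDFReal_pos a 1 x one_ne_zero
  have hpb := gaussianPDFReal_pos b 1 x one_ne_zero
  have htr : ((gaussianPDF a 1 x * (gaussianPDF b 1 x)⁻¹).toReal)
      = gaussianPDFReal a 1 x / gaussianPDFReal b 1 x := by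
    simp [gaussianPDF, ENNReal.toReal_mul, ENNReal.toReal_inv,
      ENNReal.toReal_ofReal hpa.le, ENNReal.toReal_ofReal hpb.le, div_eq_mul_inv]
  rw [htr, Real.log_div hpa.ne' hpb.ne']
  rw [gaussianPDFReal, gaussianPDFReal,
    Real.log_mul (by positivity) (Real.exp_pos _).ne',
    Real.log_mul (by positivity) (Real.exp_pos _).ne',
    Real.log_exp, Real.log_exp]
  push_cast
  ring

lemma klGauss (a b : ℝ) :
    klDiv (gaussianReal a 1) (gaussianReal b 1) = (((a - b)^2 / 2 : ℝ) : EReal) := by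
  have hPQ : gaussianReal a 1 ≪ gaussianReal b 1 :=
    (gaussianReal_absolutelyContinuous a one_ne_zero).trans
      (gaussianReal_absolutelyContinuous' b one_ne_zero)
  have hlin : Integrable (fun x : ℝ => (a - b) * x + (b^2 - a^2) / 2) (gaussianReal a 1) :=
    ((integrable_id_gauss a).const_mul (a - b)).add (integrable_const _)
  have hInt : Integrable
      (fun x => Real.log (((gaussianReal a 1).rnDeriv (gaussianReal b 1) x).toReal))
      (gaussianReal a 1) := hlin.congr (rnDeriv_ae a b).symm
  rw [klDiv, if_pos ⟨hPQ, hInt⟩]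
  congr 1
  rw [integral_congr_ae (rnDeriv_ae a b),
    integral_add ((integrable_id_gauss a).const_mul (a - b)) (integrable_const _),
    MeasureTheory.integral_const_mul, integral_id_gauss, integral_const]
  simp
  ring

end KLAux

/-- Tightness of the `√ε` rate: with `t = √(2C)`, `δ = √(2ε)`, `N₁ = N(0,1)`,
`N₂ = N(δ,1)`, `P = N(t,1)`, one has `KL(N₁‖N₂) = ε`, `KL(P‖N₁) = C`, and
`KL(P‖N₂) = C - 2√(Cε) + ε`. -/
theorem kl_sqrt_rate_tight (C ε : ℝ) (hC : 0 < C) (hε : 0 < ε) :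
    klDiv (gaussianReal 0 1) (gaussianReal (Real.sqrt (2 * ε)) 1) = (ε : EReal) ∧
    klDiv (gaussianReal (Real.sqrt (2 * C)) 1) (gaussianReal 0 1) = (C : EReal) ∧
    klDiv (gaussianReal (Real.sqrt (2 * C)) 1) (gaussianReal (Real.sqrt (2 * ε)) 1)
      = ((C - 2 * Real.sqrt (C * ε) + ε : ℝ) : EReal) := by
  have hsε : Real.sqrt (2 * ε) ^ 2 = 2 * ε := Real.sq_sqrt (by positivity)
  have hsC : Real.sqrt (2 * C) ^ 2 = 2 * C := Real.sq_sqrt (by positivity)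
  have hmul : Real.sqrt (2 * C) * Real.sqrt (2 * ε) = 2 * Real.sqrt (C * ε) := by
    rw [← Real.sqrt_mul (by positivity)]
    rw [show 2 * C * (2 * ε) = 2^2 * (C * ε) by ring, Real.sqrt_mul (by positivity),
      Real.sqrt_sq (by norm_num)]
  refine ⟨?_, ?_, ?_⟩
  · rw [KLAux.klGauss]
    congr 1
    rw [show (0 - Real.sqrt (2 * ε))^2 = Real.sqrt (2 * ε)^2 by ring, hsε]
    ring
  · rw [KLAux.klGauss]
    congr 1
    rw [sub_zero, hsC]
    ring
  · rw [KLAux.klGauss]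
    congr 1
    rw [sub_sq, hsε, hsC, mul_assoc, hmul]
    ring
end
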